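/- arXiv:2108.07193 — 2 statements merged into one kernel-verified Lean document; each statement's English description precedes it below -/
import Mathlib

section
/- Let u : ℝⁿ → ℝᵐ be 1-Lipschitz, let S be a leaf of u with tangent space V, let P be the orthogonal projection of ℝⁿ onto V, let T : V → ℝᵐ be the linear isometry with u(x) − u(y) = T(x − y) for x, y ∈ S, and let Q be the orthogonal projection of ℝᵐ onto T(V). Then the map Q∘u is differentiable at every point z₀ of the relative interior of S, with derivative D(Qu)(z₀) = T∘P. -/
/-!
Write `h = z - z₀` and `w = u z - u z₀`. For `v ∈ V` small, `z₀ + v` lies in `S`, so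
`u (z₀ + v) = u z₀ + T v` and the 1-Lipschitz bound between `z` and `z₀ - v` reads
`‖w + T v‖ ≤ ‖h + v‖`; squaring, the quadratic terms `‖T v‖² = ‖v‖²` cancel and
`⟪w - T (P h), T v⟫ ≤ (‖h‖² - ‖w‖²) / 2`. Testing this against `T v` of norm `ε` in the
direction of `Q (w - T (P h))` gives `ε ‖Q w - T (P h)‖ ≤ ‖h‖² / 2`, an `O(‖h‖²)` error term.
-/

def IsLeaf {n m : ℕ} (u : EuclideanSpace ℝ (Fin n) → EuclideanSpace ℝ (Fin m))
    (S : Set (EuclideanSpace ℝ (Fin n))) : Prop :=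
  (∀ x ∈ S, ∀ y ∈ S, ‖u x - u y‖ = ‖x - y‖) ∧
  ∀ y ∉ S, ∃ x ∈ S, ‖u y - u x‖ < ‖y - x‖

noncomputable def projL {N : ℕ} (V : Submodule ℝ (EuclideanSpace ℝ (Fin N))) :
    EuclideanSpace ℝ (Fin N) →L[ℝ] EuclideanSpace ℝ (Fin N) :=
  V.subtypeL.comp (Submodule.orthogonalProjectionOnto V)

open Asymptotics Filter
open scoped RealInnerProductSpace

section

variable {E F : Type*} [NormedAddCommGroup E] [InnerProductSpace ℝ E]
  [NormedAddCommGroup F] [InnerProductSpace ℝ F]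

theorem exists_pos_add_mem_of_mem_intrinsicInterior {S : Set E} {z₀ : E}
    (hz₀ : z₀ ∈ intrinsicInterior ℝ S) :
    ∃ ε > 0, ∀ v ∈ vectorSpan ℝ S, ‖v‖ ≤ ε → z₀ + v ∈ S := by
  obtain ⟨p, hp, rfl⟩ := hz₀
  obtain ⟨δ, hδ, hball⟩ := Metric.mem_nhds_iff.mp (mem_interior_iff_mem_nhds.mp hp)
  refine ⟨δ / 2, half_pos hδ, fun v hv hvδ => ?_⟩
  have hmem : v +ᵥ (p : E) ∈ affineSpan ℝ S :=
    AffineSubspace.vadd_mem_of_mem_direction (by rwa [direction_affineSpan]) p.2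
  have hdist : (⟨v +ᵥ (p : E), hmem⟩ : affineSpan ℝ S) ∈ Metric.ball p δ := by
    rw [Metric.mem_ball, Subtype.dist_eq]
    change dist (v + (p : E)) p < δ
    rw [dist_eq_norm, add_sub_cancel_right]
    linarith
  simpa [add_comm] using hball hdist

theorem Submodule.mul_norm_starProjection_le {K : Submodule ℝ F} [K.HasOrthogonalProjection]
    {x : F} {ε C : ℝ} (hε : 0 < ε) (h : ∀ y ∈ K, ‖y‖ ≤ ε → ⟪x, y⟫ ≤ C) :
    ε * ‖K.starProjection x‖ ≤ C := by
  set p := K.starProjection x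
  have hpK : p ∈ K := K.starProjection_apply_mem x
  rcases eq_or_ne p 0 with hp | hp
  · simpa [hp] using h 0 K.zero_mem (by simpa using hε.le)
  have hnp : 0 < ‖p‖ := norm_pos_iff.mpr hp
  have hxp : ⟪x, p⟫ = ‖p‖ ^ 2 := by
    have hsymm := K.inner_starProjection_left_eq_right x p
    rw [K.starProjection_eq_self_iff.mpr hpK] at hsymm
    exact hsymm.symm.trans (real_inner_self_eq_norm_sq p)
  calc ε * ‖p‖ = ⟪x, (ε / ‖p‖) • p⟫ := by
        rw [inner_smul_right, hxp]; field_simp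
    _ ≤ C := h _ (K.smul_mem _ hpK) (by
        rw [norm_smul, Real.norm_of_nonneg (by positivity), div_mul_cancel₀ _ hnp.ne'])

variable (V : Submodule ℝ E) [V.HasOrthogonalProjection] (T : E →L[ℝ] F)
  [(V.map (T : E →ₗ[ℝ] F)).HasOrthogonalProjection]

theorem two_mul_mul_norm_starProjection_map_sub_le (hT : ∀ v ∈ V, ‖T v‖ = ‖v‖)
    {ε : ℝ} (hε : 0 < ε) {h : E} {w : F}
    (hlip : ∀ v ∈ V, ‖v‖ ≤ ε → ‖w - T v‖ ≤ ‖h - v‖) :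
    2 * ε * ‖(V.map (T : E →ₗ[ℝ] F)).starProjection w - T (V.starProjection h)‖
      ≤ ‖h‖ ^ 2 - ‖w‖ ^ 2 := by
  set K := V.map (T : E →ₗ[ℝ] F)
  have hPh : V.starProjection h ∈ V := V.starProjection_apply_mem h
  have hTPh : K.starProjection (T (V.starProjection h)) = T (V.starProjection h) :=
    K.starProjection_eq_self_iff.mpr (Submodule.mem_map_of_mem hPh)
  let TV : V →ₗᵢ[ℝ] F := ⟨(T : E →ₗ[ℝ] F) ∘ₗ V.subtype, fun v => hT v v.2⟩
  rw [← hTPh, ← map_sub, mul_assoc, ← le_div_iff₀' two_pos]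
  refine Submodule.mul_norm_starProjection_le hε ?_
  rintro _ ⟨v, hv, rfl⟩ hvε
  rw [ContinuousLinearMap.coe_coe, hT v hv] at hvε
  have hTinner : ⟪T (V.starProjection h), T v⟫ = ⟪h, v⟫ :=
    calc ⟪T (V.starProjection h), T v⟫ = ⟪V.starProjection h, v⟫ :=
          TV.inner_map_map ⟨_, hPh⟩ ⟨v, hv⟩
      _ = ⟪h, V.starProjection v⟫ := V.inner_starProjection_left_eq_right h v
      _ = ⟪h, v⟫ := by rw [V.starProjection_eq_self_iff.mpr hv]
  have hle : ‖w + T v‖ ^ 2 ≤ ‖h + v‖ ^ 2 := by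
    have := hlip (-v) (V.neg_mem hv) (by rwa [norm_neg])
    rw [map_neg, sub_neg_eq_add, sub_neg_eq_add] at this
    exact pow_le_pow_left₀ (norm_nonneg _) this 2
  rw [norm_add_sq_real, norm_add_sq_real, hT v hv] at hle
  rw [ContinuousLinearMap.coe_coe, inner_sub_left, hTinner]
  linarith

theorem hasFDerivAt_starProjection_map_comp {u : E → F} (hu : LipschitzWith 1 u)
    (hT : ∀ v ∈ V, ‖T v‖ = ‖v‖) {z₀ : E} {ε : ℝ} (hε : 0 < ε)
    (hslice : ∀ v ∈ V, ‖v‖ ≤ ε → u (z₀ + v) - u z₀ = T v) :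
    HasFDerivAt (fun z => (V.map (T : E →ₗ[ℝ] F)).starProjection (u z))
      (T ∘L V.starProjection) z₀ := by
  rw [hasFDerivAt_iff_isLittleO_nhds_zero]
  refine (IsBigO.of_bound (1 / (2 * ε)) (Eventually.of_forall fun y => ?_)).trans_isLittleO
    (isLittleO_norm_pow_id one_lt_two)
  have hquad := two_mul_mul_norm_starProjection_map_sub_le V T hT hε
    (h := y) (w := u (z₀ + y) - u z₀) fun v hv hvε => by
      rw [← hslice v hv hvε, sub_sub_sub_cancel_right, ← dist_eq_norm, ← dist_eq_norm]
      simpa using hu.dist_le_mul (z₀ + y) (z₀ + v)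
  rw [← map_sub, ContinuousLinearMap.comp_apply, norm_pow, norm_norm, one_div_mul_eq_div,
    le_div_iff₀' (by positivity)]
  nlinarith [norm_nonneg (u (z₀ + y) - u z₀)]

end

theorem stmt_4_general {n m : ℕ} (u : EuclideanSpace ℝ (Fin n) → EuclideanSpace ℝ (Fin m))
    (hu : LipschitzWith 1 u)
    (S : Set (EuclideanSpace ℝ (Fin n)))
    (T : EuclideanSpace ℝ (Fin n) →L[ℝ] EuclideanSpace ℝ (Fin m))
    (hTiso : ∀ v ∈ vectorSpan ℝ S, ‖T v‖ = ‖v‖)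
    (hT : ∀ x ∈ S, ∀ y ∈ S, u x - u y = T (x - y)) :
    ∀ z₀ ∈ intrinsicInterior ℝ S,
      HasFDerivAt (fun z => projL ((vectorSpan ℝ S).map (T : EuclideanSpace ℝ (Fin n) →ₗ[ℝ] EuclideanSpace ℝ (Fin m))) (u z))
        (T.comp (projL (vectorSpan ℝ S))) z₀ := by
  intro z₀ hz₀
  obtain ⟨ε, hε, hslice⟩ := exists_pos_add_mem_of_mem_intrinsicInterior hz₀
  exact hasFDerivAt_starProjection_map_comp _ T hu hTiso hε fun v hv hvε => by
    simpa using hT _ (hslice v hv hvε) z₀ (intrinsicInterior_subset hz₀)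

/-- Let `S` be a leaf of a `1`-Lipschitz map `u : ℝⁿ → ℝᵐ` with tangent
space `V = vectorSpan S`, let `P` be the orthogonal projection onto `V`, let `T` be the
linear isometry of `V` into `ℝᵐ` with `u x − u y = T (x − y)` on `S`, and let `Q` be the
orthogonal projection of `ℝᵐ` onto `T(V)`.  Then `Q ∘ u` is differentiable at every
point `z₀` of the relative interior of `S`, with derivative `T ∘ P`. -/
theorem stmt_4 {n m : ℕ} (u : EuclideanSpace ℝ (Fin n) → EuclideanSpace ℝ (Fin m))
    (hu : LipschitzWith 1 u)
    (S : Set (EuclideanSpace ℝ (Fin n))) (hS : IsLeaf u S)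
    (T : EuclideanSpace ℝ (Fin n) →L[ℝ] EuclideanSpace ℝ (Fin m))
    (hTiso : ∀ v ∈ vectorSpan ℝ S, ‖T v‖ = ‖v‖)
    (hT : ∀ x ∈ S, ∀ y ∈ S, u x - u y = T (x - y)) :
    ∀ z₀ ∈ intrinsicInterior ℝ S,
      HasFDerivAt (fun z => projL ((vectorSpan ℝ S).map (T : EuclideanSpace ℝ (Fin n) →ₗ[ℝ] EuclideanSpace ℝ (Fin m))) (u z))
        (T.comp (projL (vectorSpan ℝ S))) z₀ :=
  stmt_4_general u hu S T hTiso hT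
end

section
/- Let u : ℝⁿ → ℝᵐ be 1-Lipschitz and let k ∈ {1,…,m}. A point x ∈ ℝⁿ belongs to the relative interior of a leaf of u of dimension k if and only if α_k(x) > 0 and β_{k+1}(x) = 0 (where β_{m+1} ≡ 0 by convention). -/
open scoped ENNReal

/-- `α_k(x)`: the supremum of all radii `r` for which there exist a `k`-dimensional
subspace `V ⊆ ℝⁿ` and a linear isometry `T : V → ℝᵐ` such that `u x − u y = T (x − y)`
for all `y ∈ (x + V) ∩ B(x, r)` (closed ball); valued in `ℝ ∪ {∞} = ℝ≥0∞`. -/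
noncomputable def alphaK {n m : ℕ}
    (u : EuclideanSpace ℝ (Fin n) → EuclideanSpace ℝ (Fin m)) (k : ℕ)
    (x : EuclideanSpace ℝ (Fin n)) : ℝ≥0∞ :=
  sSup {r : ℝ≥0∞ | ∃ V : Submodule ℝ (EuclideanSpace ℝ (Fin n)),
    Module.finrank ℝ V = k ∧
    ∃ T : EuclideanSpace ℝ (Fin n) →L[ℝ] EuclideanSpace ℝ (Fin m),
      (∀ v ∈ V, ‖T v‖ = ‖v‖) ∧
      ∀ y : EuclideanSpace ℝ (Fin n), y - x ∈ V → edist y x ≤ r →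
        u x - u y = T (x - y)}

/-- A subset of `ℝⁿ` is a convex cone if it is closed under addition and under
multiplication by nonnegative scalars. -/
def IsConvexConeSet {n : ℕ} (C : Set (EuclideanSpace ℝ (Fin n))) : Prop :=
  (∀ c ∈ C, ∀ t : ℝ, 0 ≤ t → t • c ∈ C) ∧ ∀ a ∈ C, ∀ b ∈ C, a + b ∈ C

/-- `C ∈ C_{n,k}(r)`: `C` is a `k`-dimensional convex cone in `ℝⁿ` containing points
`c₁, …, c_k` of norm at most `1` whose Gram matrix has determinant at least `r`. -/
def MemCnk {n : ℕ} (k : ℕ) (r : ℝ) (C : Set (EuclideanSpace ℝ (Fin n))) : Prop :=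
  IsConvexConeSet C ∧ Module.finrank ℝ (Submodule.span ℝ C) = k ∧
  ∃ c : Fin k → EuclideanSpace ℝ (Fin n),
    (∀ i, c i ∈ C ∧ ‖c i‖ ≤ 1) ∧
    r ≤ (Matrix.of fun i j => (inner ℝ (c i) (c j) : ℝ)).det

/-- `β_k(x)`: the supremum of all `r ≥ 0` for which there exist a cone `C ∈ C_{n,k}(r)`
and a linear isometry `T : span C → ℝᵐ` with `u x − u y = T (x − y)` for all
`y ∈ (x + C) ∩ B(x, r)` (closed ball).  (For `k = m + 1` this vanishes identically,
in accordance with the convention `β_{m+1} ≡ 0`.) -/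
noncomputable def betaK {n m : ℕ}
    (u : EuclideanSpace ℝ (Fin n) → EuclideanSpace ℝ (Fin m)) (k : ℕ)
    (x : EuclideanSpace ℝ (Fin n)) : ℝ :=
  sSup {r : ℝ | 0 ≤ r ∧ ∃ C : Set (EuclideanSpace ℝ (Fin n)), MemCnk k r C ∧
    ∃ T : EuclideanSpace ℝ (Fin n) →L[ℝ] EuclideanSpace ℝ (Fin m),
      (∀ v ∈ Submodule.span ℝ C, ‖T v‖ = ‖v‖) ∧
      ∀ y : EuclideanSpace ℝ (Fin n), y - x ∈ C → ‖y - x‖ ≤ r →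
        u x - u y = T (x - y)}

/-!
If `u` is isometric on a set `S ∋ x`, then the vectors `y - x` and `u y - u x` (`y ∈ S`) have the
same Gram matrix, so `y - x ↦ u y - u x` extends to a linear map that is isometric on the
direction of `S`. Together with the rigidity of `1`-Lipschitz maps on segments whose endpoints
are mapped isometrically, this makes every leaf convex.

Near a relative interior point `x` of a `k`-dimensional leaf, `u` is therefore an affine isometry
on a `k`-disc, so `α_k(x) > 0`. If `u` were an affine isometry on a small piece of a
`(k+1)`-dimensional cone at `x`, every point `y` of that piece would satisfy
`‖u y - u z‖ = ‖y - z‖` for all `z` in the leaf (test the Lipschitz bound against `z` and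
against a point of the leaf on the other side of `x`), so the piece would lie in the leaf, whose
direction is only `k`-dimensional; hence `β_{k+1}(x) = 0`.

Conversely, by Zorn's lemma the disc witnessing `α_k(x) > 0` lies in a leaf. If the leaf had a
point `z` off `x + V`, convexity would put a small piece of the `(k+1)`-dimensional cone
`V + ℝ≥0 (z - x)` into the leaf, and `β_{k+1}(x) > 0`. So the leaf has direction `V` and contains
a relative neighbourhood of `x`.
-/

open RealInnerProductSpace

section NormedSpace

variable {E F : Type*} [NormedAddCommGroup E] [NormedSpace ℝ E] [NormedAddCommGroup F]
  [NormedSpace ℝ F]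

theorem mem_intrinsicInterior_iff_exists_ball {S : Set E} {x : E} :
    x ∈ intrinsicInterior ℝ S ↔
      x ∈ S ∧ ∃ ε > 0, ∀ v ∈ vectorSpan ℝ S, ‖v‖ < ε → x + v ∈ S := by
  constructor
  · intro hx
    refine ⟨intrinsicInterior_subset hx, ?_⟩
    obtain ⟨y, hy, rfl⟩ := mem_intrinsicInterior.1 hx
    obtain ⟨ε, hε, hball⟩ := Metric.mem_nhds_iff.1 (mem_interior_iff_mem_nhds.1 hy)
    refine ⟨ε, hε, fun v hv hvε => ?_⟩
    have hmem : v +ᵥ (y : E) ∈ affineSpan ℝ S :=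
      AffineSubspace.vadd_mem_of_mem_direction (by rwa [direction_affineSpan]) y.2
    have := @hball ⟨_, hmem⟩ (by simpa [Subtype.dist_eq, dist_eq_norm] using hvε)
    simpa [add_comm] using this
  · rintro ⟨hxS, ε, hε, hball⟩
    refine mem_intrinsicInterior.2 ⟨⟨x, subset_affineSpan ℝ S hxS⟩, ?_, rfl⟩
    refine mem_interior_iff_mem_nhds.2 (Metric.mem_nhds_iff.2 ⟨ε, hε, fun y hy => ?_⟩)
    have hyx : (y : E) - x ∈ vectorSpan ℝ S := by
      rw [← direction_affineSpan]
      exact AffineSubspace.vsub_mem_direction y.2 (subset_affineSpan ℝ S hxS)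
    simpa using hball _ hyx (by simpa [Subtype.dist_eq, dist_eq_norm] using hy)

theorem span_le_vectorSpan_of_forall_add_mem {S C : Set E} {x : E} {r : ℝ}
    (hC : ∀ c ∈ C, ∀ t : ℝ, 0 ≤ t → t • c ∈ C) (hx : x ∈ S) (hr : 0 < r)
    (hCS : ∀ c ∈ C, ‖c‖ ≤ r → x + c ∈ S) : Submodule.span ℝ C ≤ vectorSpan ℝ S := by
  refine Submodule.span_le.2 fun c hc => ?_
  rcases eq_or_ne c 0 with rfl | hc0
  · exact Submodule.zero_mem _
  have hs : 0 < r / ‖c‖ := div_pos hr (norm_pos_iff.2 hc0)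
  have hmem : x + (r / ‖c‖) • c ∈ S := hCS _ (hC c hc _ hs.le) (by
    rw [norm_smul, Real.norm_of_nonneg hs.le, div_mul_cancel₀ _ (norm_ne_zero_iff.2 hc0)])
  have := vsub_mem_vectorSpan ℝ hmem hx
  rwa [vsub_eq_sub, add_sub_cancel_left, Submodule.smul_mem_iff _ hs.ne'] at this

theorem LipschitzWith.map_lineMap_of_dist_eq [StrictConvexSpace ℝ F] {u : E → F}
    (hu : LipschitzWith 1 u) {p q : E} (h : dist (u p) (u q) = dist p q) {t : ℝ}
    (ht : t ∈ Set.Icc (0 : ℝ) 1) :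
    u (AffineMap.lineMap p q t) = AffineMap.lineMap (u p) (u q) t := by
  set y := AffineMap.lineMap p q t
  have hpy : dist (u p) (u y) ≤ t * dist p q := by
    simpa [y, dist_left_lineMap, abs_of_nonneg ht.1] using hu.dist_le_mul p y
  have hyq : dist (u y) (u q) ≤ (1 - t) * dist p q := by
    simpa [y, dist_lineMap_right, abs_of_nonneg (sub_nonneg.2 ht.2)] using hu.dist_le_mul y q
  have hpq := dist_triangle (u p) (u y) (u q)
  rw [h] at hpq
  exact eq_lineMap_of_dist_eq_mul_of_dist_eq_mul (by rw [h]; linarith) (by rw [h]; linarith)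

theorem exists_norm_le_mul_norm_add_smul [FiniteDimensional ℝ E] {V : Submodule ℝ E} {w : E}
    (hw : w ∉ V) : ∃ K > 0, ∀ v ∈ V, ∀ t : ℝ, ‖v‖ ≤ K * ‖v + t • w‖ ∧ |t| ≤ K * ‖v + t • w‖ := by
  set f : V × ℝ →ₗ[ℝ] E := V.subtype.coprod (LinearMap.toSpanSingleton ℝ E w)
  have hf : LinearMap.ker f = ⊥ := by
    refine LinearMap.ker_eq_bot'.2 fun ⟨v, t⟩ hvt => ?_
    replace hvt : (v : E) + t • w = 0 := by simpa [f] using hvt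
    obtain rfl : t = 0 := by
      by_contra ht
      refine hw ((V.smul_mem_iff ht).1 ?_)
      rw [eq_neg_of_add_eq_zero_right hvt]
      exact V.neg_mem v.2
    simp_all
  obtain ⟨K, hK, hKf⟩ := f.exists_antilipschitzWith hf
  refine ⟨K, hK, fun v hv t => ?_⟩
  have h := ZeroHomClass.bound_of_antilipschitz f hKf (⟨v, hv⟩, t)
  simp only [Prod.norm_def, f, LinearMap.coprod_apply, Submodule.subtype_apply,
    LinearMap.toSpanSingleton_apply, Real.norm_eq_abs] at h
  exact ⟨(le_max_left _ _).trans h, (le_max_right _ _).trans h⟩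

def subspaceAddRay (V : Submodule ℝ E) (w : E) : Set E :=
  {c | ∃ v ∈ V, ∃ t : ℝ, 0 ≤ t ∧ v + t • w = c}

theorem span_subspaceAddRay (V : Submodule ℝ E) (w : E) :
    Submodule.span ℝ (subspaceAddRay V w) = V ⊔ ℝ ∙ w := by
  refine le_antisymm (Submodule.span_le.2 ?_) (sup_le ?_ ?_)
  · rintro _ ⟨v, hv, t, -, rfl⟩
    exact Submodule.add_mem_sup hv (Submodule.smul_mem _ t (Submodule.mem_span_singleton_self w))
  · exact fun v hv => Submodule.subset_span ⟨v, hv, 0, le_rfl, by simp⟩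
  · exact (Submodule.span_singleton_le_iff_mem _ _).2
      (Submodule.subset_span ⟨0, zero_mem _, 1, zero_le_one, by simp⟩)

theorem Convex.exists_add_mem_of_mem_subspaceAddRay [FiniteDimensional ℝ E] {S : Set E}
    (hS : Convex ℝ S) {x w : E} {V : Submodule ℝ E} {ε : ℝ} (hε : 0 < ε)
    (hV : ∀ v ∈ V, ‖v‖ ≤ ε → x + v ∈ S) (hw : x + w ∈ S) (hwV : w ∉ V) :
    ∃ δ > 0, ∀ c ∈ subspaceAddRay V w, ‖c‖ ≤ δ → x + c ∈ S := by
  obtain ⟨K, hK, hKw⟩ := exists_norm_le_mul_norm_add_smul hwV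
  refine ⟨min 1 ε / (2 * K), by positivity, ?_⟩
  rintro _ ⟨v, hv, t, ht, rfl⟩ hc
  obtain ⟨hvK, htK⟩ := hKw v hv t
  have hKc : K * ‖v + t • w‖ ≤ min 1 ε / 2 := calc
    K * ‖v + t • w‖ ≤ K * (min 1 ε / (2 * K)) := by gcongr
    _ = min 1 ε / 2 := by field_simp
  have ht₁ : t ≤ 1 / 2 := by linarith [abs_of_nonneg ht, min_le_left 1 ε]
  have hv₁ : ‖v‖ ≤ (1 - t) * ε := by nlinarith [min_le_right 1 ε]
  have h₁ : 0 < 1 - t := by linarith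
  -- `x + (v + t • w)` is a convex combination of `x + (1 - t)⁻¹ • v` and `x + w`.
  have hp : x + (1 - t)⁻¹ • v ∈ S := hV _ (V.smul_mem _ hv) (by
    rw [norm_smul, Real.norm_of_nonneg (inv_nonneg.2 h₁.le), inv_mul_le_iff₀ h₁]
    exact hv₁)
  convert hS hp hw h₁.le ht (by ring) using 1
  rw [smul_add, smul_add, smul_smul, mul_inv_cancel₀ h₁.ne', one_smul]
  module

end NormedSpace

section InnerProductSpace

variable {E F : Type*} [NormedAddCommGroup E] [InnerProductSpace ℝ E] [NormedAddCommGroup F]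
  [InnerProductSpace ℝ F]

theorem exists_linearMap_of_inner_eq {ι : Type*} (a : ι → E) (b : ι → F)
    (h : ∀ i j, ⟪b i, b j⟫ = ⟪a i, a j⟫) :
    ∃ T : E →ₗ[ℝ] F, (∀ i, T (a i) = b i) ∧
      ∀ v ∈ Submodule.span ℝ (Set.range a), ‖T v‖ = ‖v‖ := by
  set L₁ := Finsupp.linearCombination ℝ a
  set L₂ := Finsupp.linearCombination ℝ b
  have hinner : ∀ c d, ⟪L₂ c, L₂ d⟫ = ⟪L₁ c, L₁ d⟫ := by
    intro c d
    simp [L₁, L₂, Finsupp.linearCombination_apply, Finsupp.sum, sum_inner, inner_sum,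
      real_inner_smul_left, real_inner_smul_right, h]
  have hnorm : ∀ c, ‖L₂ c‖ = ‖L₁ c‖ := fun c => by
    rw [norm_eq_sqrt_real_inner, norm_eq_sqrt_real_inner, hinner]
  have hker : LinearMap.ker L₁ ≤ LinearMap.ker L₂ := fun c hc => by
    rw [LinearMap.mem_ker, ← norm_eq_zero, hnorm, norm_eq_zero, ← LinearMap.mem_ker]
    exact hc
  -- `L₂` factors through `L₁` because it kills the kernel of `L₁`.
  obtain ⟨T, hT⟩ := IsSemisimpleModule.extension_property
    (f := (LinearMap.ker L₁).liftQ L₁ le_rfl)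
    (LinearMap.ker_eq_bot.1 (Submodule.ker_liftQ_eq_bot _ _ _ le_rfl))
    ((LinearMap.ker L₁).liftQ L₂ hker)
  have hTL : ∀ c, T (L₁ c) = L₂ c := fun c => by
    simpa using LinearMap.congr_fun hT (Submodule.Quotient.mk c)
  refine ⟨T, fun i => by simpa [L₁, L₂] using hTL (Finsupp.single i 1), fun v hv => ?_⟩
  rw [← Finsupp.range_linearCombination] at hv
  obtain ⟨c, rfl⟩ := hv
  rw [hTL, hnorm]

theorem exists_continuousLinearMap_of_isometricOn [FiniteDimensional ℝ E] {u : E → F}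
    {S : Set E} (hS : ∀ y ∈ S, ∀ z ∈ S, ‖u y - u z‖ = ‖y - z‖) {x : E} (hx : x ∈ S) :
    ∃ T : E →L[ℝ] F, (∀ v ∈ vectorSpan ℝ S, ‖T v‖ = ‖v‖) ∧ ∀ y ∈ S, u y - u x = T (y - x) := by
  have hinner : ∀ y z : S, ⟪u y - u x, u z - u x⟫ = ⟪(y : E) - x, (z : E) - x⟫ := by
    intro y z
    rw [real_inner_eq_norm_mul_self_add_norm_mul_self_sub_norm_sub_mul_self_div_two,
      real_inner_eq_norm_mul_self_add_norm_mul_self_sub_norm_sub_mul_self_div_two,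
      sub_sub_sub_cancel_right, sub_sub_sub_cancel_right, hS y y.2 x hx, hS z z.2 x hx,
      hS y y.2 z z.2]
  obtain ⟨T, hTS, hTiso⟩ := exists_linearMap_of_inner_eq (fun y : S => (y : E) - x)
    (fun y : S => u y - u x) hinner
  refine ⟨LinearMap.toContinuousLinearMap T, fun v hv => hTiso v ?_,
    fun y hy => (hTS ⟨y, hy⟩).symm⟩
  rwa [vectorSpan_eq_span_vsub_set_right ℝ hx, Set.image_eq_range] at hv

theorem norm_sub_eq_of_norm_sub_le_of_norm_add_smul_le {p q : F} {c w : E} {t : ℝ} (ht : 0 < t)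
    (hp : ‖p‖ = ‖c‖) (hq : ‖q‖ = ‖w‖) (hsub : ‖p - q‖ ≤ ‖c - w‖)
    (hadd : ‖p + t • q‖ ≤ ‖c + t • w‖) : ‖p - q‖ = ‖c - w‖ := by
  have hsub' := pow_le_pow_left₀ (norm_nonneg _) hsub 2
  have hadd' := pow_le_pow_left₀ (norm_nonneg _) hadd 2
  rw [norm_sub_sq_real, norm_sub_sq_real, hp, hq] at hsub'
  rw [norm_add_sq_real, norm_add_sq_real, norm_smul, norm_smul, hp, hq, real_inner_smul_right,
    real_inner_smul_right] at hadd'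
  have hinner : ⟪p, q⟫ = ⟪c, w⟫ := le_antisymm (by nlinarith) (by linarith)
  rw [← sq_eq_sq₀ (norm_nonneg _) (norm_nonneg _), norm_sub_sq_real, norm_sub_sq_real, hp, hq,
    hinner]

end InnerProductSpace

section Euclidean

variable {n m : ℕ} {u : EuclideanSpace ℝ (Fin n) → EuclideanSpace ℝ (Fin m)}
  {S : Set (EuclideanSpace ℝ (Fin n))} {x : EuclideanSpace ℝ (Fin n)} {k : ℕ}

theorem alphaK_pos_iff :
    0 < alphaK u k x ↔ ∃ V : Submodule ℝ (EuclideanSpace ℝ (Fin n)),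
      Module.finrank ℝ V = k ∧
      ∃ T : EuclideanSpace ℝ (Fin n) →L[ℝ] EuclideanSpace ℝ (Fin m),
        (∀ v ∈ V, ‖T v‖ = ‖v‖) ∧ ∃ ε > 0, ∀ y : EuclideanSpace ℝ (Fin n),
          y - x ∈ V → ‖y - x‖ ≤ ε → u x - u y = T (x - y) := by
  constructor
  · intro h
    obtain ⟨ρ, ⟨V, hV, T, hTiso, hT⟩, hρ⟩ := lt_sSup_iff.1 h
    obtain ⟨ε, hε₀, hε, hερ⟩ := ENNReal.lt_iff_exists_real_btwn.1 hρ
    refine ⟨V, hV, T, hTiso, ε, ENNReal.ofReal_pos.1 hε, fun y hyV hyε => hT y hyV ?_⟩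
    exact ((edist_le_ofReal hε₀).2 (by rwa [dist_eq_norm])).trans hερ.le
  · rintro ⟨V, hV, T, hTiso, ε, hε, hT⟩
    refine (ENNReal.ofReal_pos.2 hε).trans_le (le_sSup ⟨V, hV, T, hTiso, fun y hyV hyε => ?_⟩)
    rw [edist_le_ofReal hε.le, dist_eq_norm] at hyε
    exact hT y hyV hyε

theorem isConvexConeSet_subspaceAddRay (V : Submodule ℝ (EuclideanSpace ℝ (Fin n)))
    (w : EuclideanSpace ℝ (Fin n)) : IsConvexConeSet (subspaceAddRay V w) := by
  constructor
  · rintro _ ⟨v, hv, t, ht, rfl⟩ s hs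
    exact ⟨s • v, V.smul_mem s hv, s * t, mul_nonneg hs ht, by rw [smul_add, smul_smul]⟩
  · rintro _ ⟨v, hv, t, ht, rfl⟩ _ ⟨v', hv', t', ht', rfl⟩
    exact ⟨v + v', V.add_mem hv hv', t + t', add_nonneg ht ht', by module⟩

theorem MemCnk.mono {C : Set (EuclideanSpace ℝ (Fin n))} {r r' : ℝ} (hC : MemCnk k r C)
    (hr : r' ≤ r) : MemCnk k r' C :=
  let ⟨hcone, hdim, c, hc, hdet⟩ := hC
  ⟨hcone, hdim, c, hc, hr.trans hdet⟩

theorem MemCnk.le_factorial {C : Set (EuclideanSpace ℝ (Fin n))} {r : ℝ} (hC : MemCnk k r C) :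
    r ≤ k.factorial := by
  obtain ⟨-, -, c, hc, hdet⟩ := hC
  have hentry : ∀ i j, |⟪c i, c j⟫| ≤ 1 := fun i j =>
    (abs_real_inner_le_norm _ _).trans (mul_le_one₀ (hc i).2 (norm_nonneg _) (hc j).2)
  have := Matrix.det_le (abv := AbsoluteValue.abs) (A := Matrix.of fun i j => ⟪c i, c j⟫)
    (x := 1) hentry
  simp only [AbsoluteValue.abs_apply, one_pow, Fintype.card_fin, nsmul_eq_mul, mul_one] at this
  exact hdet.trans ((le_abs_self _).trans this)

theorem exists_memCnk {C : Set (EuclideanSpace ℝ (Fin n))} (hC : IsConvexConeSet C)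
    (hk : Module.finrank ℝ (Submodule.span ℝ C) = k) : ∃ r > 0, MemCnk k r C := by
  obtain ⟨b, hbC, hspan, hli⟩ := exists_linearIndependent ℝ C
  have := hli.finite
  have := Fintype.ofFinite b
  have hcard : Fintype.card b = k := by
    rw [← hk, ← hspan, ← finrank_span_eq_card hli, Subtype.range_coe]
  set e := (Fintype.equivFinOfCardEq hcard).symm
  have hne : ∀ i, (e i : EuclideanSpace ℝ (Fin n)) ≠ 0 := fun i => hli.ne_zero (e i)
  set c := fun i => ‖(e i : EuclideanSpace ℝ (Fin n))‖⁻¹ • (e i : EuclideanSpace ℝ (Fin n))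
  have hc : LinearIndependent ℝ c := (hli.comp e e.injective).units_smul
    fun i => Units.mk0 _ (inv_ne_zero (norm_ne_zero_iff.2 (hne i)))
  refine ⟨_, (Matrix.posDef_gram_of_linearIndependent hc).det_pos, hC, hk, c, fun i =>
    ⟨hC.1 _ (hbC (e i).2) _ (inv_nonneg.2 (norm_nonneg _)), (norm_smul_inv_norm (hne i)).le⟩,
    le_rfl⟩

theorem betaK_nonneg : 0 ≤ betaK u k x :=
  Real.sSup_nonneg fun _ hr => hr.1

theorem betaK_pos_iff :
    0 < betaK u k x ↔ ∃ r > 0, ∃ C : Set (EuclideanSpace ℝ (Fin n)), MemCnk k r C ∧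
      ∃ T : EuclideanSpace ℝ (Fin n) →L[ℝ] EuclideanSpace ℝ (Fin m),
        (∀ v ∈ Submodule.span ℝ C, ‖T v‖ = ‖v‖) ∧ ∀ y : EuclideanSpace ℝ (Fin n),
          y - x ∈ C → ‖y - x‖ ≤ r → u x - u y = T (x - y) := by
  constructor
  · intro h
    rw [betaK] at h
    obtain ⟨r, ⟨-, hr⟩, hpos⟩ := exists_lt_of_lt_csSup (Set.nonempty_iff_ne_empty.2 fun he => by
      rw [he, Real.sSup_empty] at h
      exact h.false) h
    exact ⟨r, hpos, hr⟩
  · rintro ⟨r, hr, hC⟩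
    refine hr.trans_le (le_csSup ⟨k.factorial, ?_⟩ ⟨hr.le, hC⟩)
    rintro r' ⟨-, C', hC', -⟩
    exact hC'.le_factorial

theorem IsLeaf.mem_of_forall_norm_sub_eq (hS : IsLeaf u S) {y : EuclideanSpace ℝ (Fin n)}
    (hy : ∀ z ∈ S, ‖u y - u z‖ = ‖y - z‖) : y ∈ S := by
  by_contra hyS
  obtain ⟨z, hz, hlt⟩ := hS.2 y hyS
  exact hlt.ne (hy z hz)

theorem exists_isLeaf_superset (hu : LipschitzWith 1 u) {K : Set (EuclideanSpace ℝ (Fin n))}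
    (hK : ∀ y ∈ K, ∀ z ∈ K, ‖u y - u z‖ = ‖y - z‖) : ∃ S, K ⊆ S ∧ IsLeaf u S := by
  obtain ⟨S, hKS, hS⟩ := zorn_subset_nonempty {A | ∀ y ∈ A, ∀ z ∈ A, ‖u y - u z‖ = ‖y - z‖}
    (fun c hcS hc _ => ⟨⋃₀ c, fun y ⟨A, hA, hyA⟩ z ⟨B, hB, hzB⟩ => by
      rcases hc.total hA hB with h | h
      · exact hcS hB y (h hyA) z hzB
      · exact hcS hA y hyA z (h hzB), fun _ => Set.subset_sUnion_of_mem⟩) K hK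
  refine ⟨S, hKS, hS.1, fun y hyS => ?_⟩
  by_contra! hge
  have hy : ∀ z ∈ S, ‖u y - u z‖ = ‖y - z‖ := fun z hz => le_antisymm
    (by simpa [dist_eq_norm] using hu.dist_le_mul y z) (hge z hz)
  refine hyS (hS.2 (y := insert y S) ?_ (Set.subset_insert y S) (Set.mem_insert y S))
  rintro a (rfl | ha) b (rfl | hb)
  · simp
  · exact hy b hb
  · rw [norm_sub_rev (u a), norm_sub_rev a]
    exact hy a ha
  · exact hS.1 a ha b hb

theorem IsLeaf.convex (hu : LipschitzWith 1 u) (hS : IsLeaf u S) : Convex ℝ S := by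
  intro p hp q hq a b ha hb hab
  obtain rfl : a = 1 - b := by linarith
  refine hS.mem_of_forall_norm_sub_eq fun z hz => ?_
  obtain ⟨T, hTiso, hT⟩ := exists_continuousLinearMap_of_isometricOn hS.1 hz
  have hline := hu.map_lineMap_of_dist_eq (p := p) (q := q)
    (by rw [dist_eq_norm, dist_eq_norm, hS.1 p hp q hq]) ⟨hb, by linarith⟩
  rw [AffineMap.lineMap_apply_module, AffineMap.lineMap_apply_module] at hline
  have hdecomp : (1 - b) • p + b • q - z = (1 - b) • (p - z) + b • (q - z) := by module
  have hmem : (1 - b) • p + b • q - z ∈ vectorSpan ℝ S := by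
    rw [hdecomp]
    exact Submodule.add_mem _ (Submodule.smul_mem _ _ (vsub_mem_vectorSpan ℝ hp hz))
      (Submodule.smul_mem _ _ (vsub_mem_vectorSpan ℝ hq hz))
  calc ‖u ((1 - b) • p + b • q) - u z‖
      = ‖(1 - b) • (u p - u z) + b • (u q - u z)‖ := by rw [hline]; congr 1; module
    _ = ‖T ((1 - b) • p + b • q - z)‖ := by rw [hT p hp, hT q hq, hdecomp]; simp
    _ = ‖(1 - b) • p + b • q - z‖ := hTiso _ hmem

theorem IsLeaf.mem_of_norm_sub_eq (hu : LipschitzWith 1 u) (hS : IsLeaf u S)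
    {y : EuclideanSpace ℝ (Fin n)} (hx : x ∈ intrinsicInterior ℝ S)
    (hy : ‖u y - u x‖ = ‖y - x‖) : y ∈ S := by
  obtain ⟨hxS, ε, hε, hball⟩ := mem_intrinsicInterior_iff_exists_ball.1 hx
  obtain ⟨T, -, hT⟩ := exists_continuousLinearMap_of_isometricOn hS.1 hxS
  refine hS.mem_of_forall_norm_sub_eq fun z hz => ?_
  rcases eq_or_ne z x with rfl | hzx
  · exact hy
  have hw : 0 < ‖z - x‖ := norm_pos_iff.2 (sub_ne_zero.2 hzx)
  set t := ε / (2 * ‖z - x‖)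
  have ht : 0 < t := by positivity
  have hz' : x - t • (z - x) ∈ S := by
    have := hball (-(t • (z - x))) (Submodule.neg_mem _ (Submodule.smul_mem _ _
      (vsub_mem_vectorSpan ℝ hz hxS))) (by
        rw [norm_neg, norm_smul, Real.norm_of_nonneg ht.le, div_mul_eq_mul_div,
          mul_div_mul_right _ _ hw.ne']
        linarith)
    rwa [← sub_eq_add_neg] at this
  have hL : ∀ a b, ‖u a - u b‖ ≤ ‖a - b‖ := fun a b => by
    simpa [dist_eq_norm] using hu.dist_le_mul a b
  have hz'u : u (x - t • (z - x)) - u x = -(t • (u z - u x)) := by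
    rw [hT _ hz', hT z hz, ← map_smul, ← map_neg]
    congr 1
    abel
  have hadd : ‖u y - u x + t • (u z - u x)‖ ≤ ‖y - x + t • (z - x)‖ := by
    have h := hL y (x - t • (z - x))
    rwa [← sub_sub_sub_cancel_right _ _ (u x), hz'u, sub_neg_eq_add,
      show y - (x - t • (z - x)) = y - x + t • (z - x) by abel] at h
  have key := norm_sub_eq_of_norm_sub_le_of_norm_add_smul_le ht hy (hS.1 z hz x hxS)
    (by rw [sub_sub_sub_cancel_right, sub_sub_sub_cancel_right]; exact hL y z) hadd
  rwa [sub_sub_sub_cancel_right, sub_sub_sub_cancel_right] at key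

theorem IsLeaf.alphaK_pos (hS : IsLeaf u S) (hx : x ∈ intrinsicInterior ℝ S) :
    0 < alphaK u (Module.finrank ℝ (vectorSpan ℝ S)) x := by
  obtain ⟨hxS, ε, hε, hball⟩ := mem_intrinsicInterior_iff_exists_ball.1 hx
  obtain ⟨T, hTiso, hT⟩ := exists_continuousLinearMap_of_isometricOn hS.1 hxS
  refine alphaK_pos_iff.2 ⟨vectorSpan ℝ S, rfl, T, hTiso, ε / 2, by positivity,
    fun y hyV hyε => ?_⟩
  have hy : y ∈ S := by simpa using hball (y - x) hyV (by linarith)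
  rw [← neg_sub (u y), hT y hy, ← map_neg, neg_sub]

theorem IsLeaf.betaK_finrank_add_one_eq_zero (hu : LipschitzWith 1 u) (hS : IsLeaf u S)
    (hx : x ∈ intrinsicInterior ℝ S) :
    betaK u (Module.finrank ℝ (vectorSpan ℝ S) + 1) x = 0 := by
  refine le_antisymm (not_lt.1 fun hβ => ?_) betaK_nonneg
  obtain ⟨r, hr, C, ⟨hC, hCdim, -⟩, T, hTiso, hT⟩ := betaK_pos_iff.1 hβ
  have hCS : ∀ c ∈ C, ‖c‖ ≤ r → x + c ∈ S := fun c hc hcr => by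
    refine hS.mem_of_norm_sub_eq hu hx ?_
    have := hT (x + c) (by simpa using hc) (by simpa using hcr)
    rw [← neg_sub (u x), this, sub_add_cancel_left, map_neg, neg_neg, add_sub_cancel_left,
      hTiso c (Submodule.subset_span hc)]
  have := Submodule.finrank_mono
    (span_le_vectorSpan_of_forall_add_mem hC.1 (intrinsicInterior_subset hx) hr hCS)
  omega

theorem IsLeaf.betaK_finrank_add_one_pos_of_sub_notMem (hu : LipschitzWith 1 u)
    (hS : IsLeaf u S) {V : Submodule ℝ (EuclideanSpace ℝ (Fin n))} {ε : ℝ} (hε : 0 < ε)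
    (hV : ∀ v ∈ V, ‖v‖ ≤ ε → x + v ∈ S) {z : EuclideanSpace ℝ (Fin n)} (hz : z ∈ S)
    (hzV : z - x ∉ V) : 0 < betaK u (Module.finrank ℝ V + 1) x := by
  have hxS : x ∈ S := by simpa using hV 0 V.zero_mem (by simpa using hε.le)
  obtain ⟨δ, hδ, hCS⟩ := (hS.convex hu).exists_add_mem_of_mem_subspaceAddRay hε hV
    (by simpa using hz) hzV
  have hC := isConvexConeSet_subspaceAddRay V (z - x)
  obtain ⟨r, hr, hCr⟩ := exists_memCnk hC
    (by rw [span_subspaceAddRay, Submodule.finrank_sup_span_singleton hzV])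
  obtain ⟨T, hTiso, hT⟩ := exists_continuousLinearMap_of_isometricOn hS.1 hxS
  have hspan := span_le_vectorSpan_of_forall_add_mem hC.1 hxS hδ hCS
  refine betaK_pos_iff.2 ⟨min r δ, lt_min hr hδ, _, hCr.mono (min_le_left _ _), T,
    fun v hv => hTiso v (hspan hv), fun y hyC hyδ => ?_⟩
  have hy : y ∈ S := by simpa using hCS (y - x) hyC (hyδ.trans (min_le_right _ _))
  rw [← neg_sub (u y), hT y hy, ← map_neg, neg_sub]

theorem exists_isLeaf_of_alphaK_pos_of_betaK_eq_zero (hu : LipschitzWith 1 u)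
    (hα : 0 < alphaK u k x) (hβ : betaK u (k + 1) x = 0) :
    ∃ S, IsLeaf u S ∧ Module.finrank ℝ (vectorSpan ℝ S) = k ∧ x ∈ intrinsicInterior ℝ S := by
  obtain ⟨V, rfl, T, hTiso, ε, hε, hT⟩ := alphaK_pos_iff.1 hα
  obtain ⟨S, hKS, hS⟩ := exists_isLeaf_superset hu (K := {y | y - x ∈ V ∧ ‖y - x‖ ≤ ε})
    fun y ⟨hyV, hyε⟩ z ⟨hzV, hzε⟩ => by
      rw [← sub_sub_sub_cancel_left (u z) (u y) (u x), hT y hyV hyε, hT z hzV hzε, ← map_sub,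
        sub_sub_sub_cancel_left, hTiso _ (by simpa using V.sub_mem hyV hzV)]
  have hV : ∀ v ∈ V, ‖v‖ ≤ ε → x + v ∈ S := fun v hv hvε => hKS ⟨by simpa, by simpa⟩
  have hxS : x ∈ S := by simpa using hV 0 V.zero_mem (by simpa using hε.le)
  have hVS : V ≤ vectorSpan ℝ S := by
    simpa using span_le_vectorSpan_of_forall_add_mem (C := V)
      (fun c hc t _ => V.smul_mem t hc) hxS hε hV
  have hSV : vectorSpan ℝ S ≤ V := by
    rw [vectorSpan_eq_span_vsub_set_right ℝ hxS, Submodule.span_le]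
    rintro _ ⟨z, hz, rfl⟩
    by_contra hzV
    exact (hS.betaK_finrank_add_one_pos_of_sub_notMem hu hε hV hz hzV).ne' hβ
  have hdir : vectorSpan ℝ S = V := le_antisymm hSV hVS
  refine ⟨S, hS, by rw [hdir], mem_intrinsicInterior_iff_exists_ball.2
    ⟨hxS, ε, hε, fun v hv hvε => hV v (hdir ▸ hv) hvε.le⟩⟩

end Euclidean

theorem stmt_15_general {n m : ℕ} (u : EuclideanSpace ℝ (Fin n) → EuclideanSpace ℝ (Fin m))
    (hu : LipschitzWith 1 u) (k : ℕ)
    (x : EuclideanSpace ℝ (Fin n)) :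
    (∃ S : Set (EuclideanSpace ℝ (Fin n)), IsLeaf u S ∧
        Module.finrank ℝ (vectorSpan ℝ S) = k ∧ x ∈ intrinsicInterior ℝ S) ↔
      (0 < alphaK u k x ∧ betaK u (k + 1) x = 0) := by
  constructor
  · rintro ⟨S, hS, rfl, hx⟩
    exact ⟨hS.alphaK_pos hx, hS.betaK_finrank_add_one_eq_zero hu hx⟩
  · rintro ⟨hα, hβ⟩
    exact exists_isLeaf_of_alphaK_pos_of_betaK_eq_zero hu hα hβ

/-- Let `u : ℝⁿ → ℝᵐ` be `1`-Lipschitz and `k ∈ {1, …, m}`.  A point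
`x ∈ ℝⁿ` belongs to the relative interior of a leaf of `u` of dimension `k` if and only
if `α_k(x) > 0` and `β_{k+1}(x) = 0`. -/
theorem stmt_15 {n m : ℕ} (u : EuclideanSpace ℝ (Fin n) → EuclideanSpace ℝ (Fin m))
    (hu : LipschitzWith 1 u) (k : ℕ) (hk1 : 1 ≤ k) (hkm : k ≤ m)
    (x : EuclideanSpace ℝ (Fin n)) :
    (∃ S : Set (EuclideanSpace ℝ (Fin n)), IsLeaf u S ∧
        Module.finrank ℝ (vectorSpan ℝ S) = k ∧ x ∈ intrinsicInterior ℝ S) ↔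
      (0 < alphaK u k x ∧ betaK u (k + 1) x = 0) :=
  stmt_15_general u hu k x
end
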